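/- arXiv:1412.4620 — 4 statements merged into one kernel-verified Lean document; each statement's English description precedes it below -/
import Mathlib

section
/- If u, v ∈ C and C is a maximal clique in G(V, E ∪ {uv}), then there exist maximal cliques C_u, C_v in G(V,E) with u ∈ C_u, v ∈ C_v, and C = (C_u ∩ C_v) ∪ {u, v}. -/
def insEdge {V : Type*} (G : SimpleGraph V) (u v : V) : SimpleGraph V :=
  G ⊔ SimpleGraph.fromEdgeSet {s(u, v)}

def IsMaxClique {V : Type*} (G : SimpleGraph V) (C : Set V) : Prop :=
  G.IsClique C ∧ ∀ D : Set V, G.IsClique D → C ⊆ D → C = D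

lemma exists_maxclique_supset {V : Type*} (G : SimpleGraph V) (S : Set V)
    (hS : G.IsClique S) : ∃ M, S ⊆ M ∧ IsMaxClique G M := by
  obtain ⟨M, hM⟩ := zorn_subset_nonempty {T : Set V | G.IsClique T}
    (fun c hc hchain hne => by
      refine ⟨⋃₀ c, ?_, fun s hs => Set.subset_sUnion_of_mem hs⟩
      intro a ha b hb hab
      obtain ⟨Ta, hTa, haT⟩ := ha
      obtain ⟨Tb, hTb, hbT⟩ := hb
      rcases hchain.total hTa hTb with h | h
      · exact hc hTb (h haT) hbT hab
      · exact hc hTa haT (h hbT) hab) S hS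
  refine ⟨M, hM.1, hM.2.prop, fun D hD hMD => ?_⟩
  exact hM.2.eq_of_le hD hMD

/-- If `u, v ∈ C` and `C` is a maximal clique in `G(V, E ∪ {uv})`, then there exist maximal
cliques `C_u, C_v` in `G(V,E)` with `u ∈ C_u`, `v ∈ C_v`, and `C = (C_u ∩ C_v) ∪ {u, v}`. -/
theorem stmt_3 {V : Type*} [Fintype V] (G : SimpleGraph V) (u v : V) (huv : u ≠ v) (C : Set V)
    (hu : u ∈ C) (hv : v ∈ C) (hC : IsMaxClique (insEdge G u v) C) :
    ∃ Cu Cv : Set V, IsMaxClique G Cu ∧ IsMaxClique G Cv ∧ u ∈ Cu ∧ v ∈ Cv ∧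
      C = (Cu ∩ Cv) ∪ {u, v} := by
  obtain ⟨hCclique, hCmax⟩ := hC
  have hadj : ∀ a b, a ∈ C → b ∈ C → a ≠ b → (a ≠ u ∨ b ≠ v) → (a ≠ v ∨ b ≠ u) → G.Adj a b := by
    intro a b ha hb hab h1 h2
    have := hCclique ha hb hab
    rcases this with h | h
    · exact h
    · simp only [SimpleGraph.fromEdgeSet_adj, Set.mem_singleton_iff] at h
      have := h.1
      rw [Sym2.eq_iff] at this
      rcases this with ⟨rfl, rfl⟩ | ⟨rfl, rfl⟩
      · exact absurd rfl (h1.resolve_left (by simp))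
      · exact absurd rfl (h2.resolve_left (by simp))
  have hCu : G.IsClique (C \ {v}) := by
    intro a ha b hb hab
    exact hadj a b ha.1 hb.1 hab (Or.inr hb.2) (Or.inl ha.2)
  have hCv : G.IsClique (C \ {u}) := by
    intro a ha b hb hab
    exact hadj a b ha.1 hb.1 hab (Or.inl ha.2) (Or.inr hb.2)
  obtain ⟨Cu, hsubu, hMu⟩ := exists_maxclique_supset G _ hCu
  obtain ⟨Cv, hsubv, hMv⟩ := exists_maxclique_supset G _ hCv
  refine ⟨Cu, Cv, hMu, hMv, hsubu ⟨hu, huv⟩, hsubv ⟨hv, huv.symm⟩, ?_⟩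
  apply Set.Subset.antisymm
  · intro w hw
    by_cases hwu : w = u
    · exact Or.inr (by simp [hwu])
    by_cases hwv : w = v
    · exact Or.inr (by simp [hwv])
    exact Or.inl ⟨hsubu ⟨hw, hwv⟩, hsubv ⟨hw, hwu⟩⟩
  · rintro w (⟨hwu, hwv⟩ | hw)
    · -- show C ∪ {w} is a clique in insEdge, use maximality
      have hclq : (insEdge G u v).IsClique (C ∪ {w}) := by
        rintro a (ha | ha) b (hb | hb) hab
        · exact hCclique ha hb hab
        · simp only [Set.mem_singleton_iff] at hb; subst hb
          by_cases hav : a = v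
          · subst hav
            exact Or.inl (hMv.1 hwv (hsubv ⟨hv, huv.symm⟩) hab.symm).symm
          · exact Or.inl (hMu.1 (hsubu ⟨ha, hav⟩) hwu hab)
        · simp only [Set.mem_singleton_iff] at ha; subst ha
          by_cases hbv : b = v
          · subst hbv
            exact Or.inl (hMv.1 hwv (hsubv ⟨hv, huv.symm⟩) hab)
          · exact Or.inl (hMu.1 hwu (hsubu ⟨hb, hbv⟩) hab)
        · simp only [Set.mem_singleton_iff] at ha hb; subst ha; subst hb
          exact absurd rfl hab
      have := hCmax (C ∪ {w}) hclq Set.subset_union_left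
      rw [this]; exact Or.inr rfl
    · rcases hw with rfl | hw
      · exact hu
      · simp only [Set.mem_singleton_iff] at hw; subst hw; exact hv
end

section
/- If u, v ∈ C and C is a maximal clique in G(V, E ∪ {uv}), then there exists a maximal clique C_u in G(V,E) with u ∈ C_u such that C = (C_u ∩ N(v)) ∪ {u, v}, where N(v) is the closed neighborhood of v in G(V,E). -/
/-- Closed neighborhood of `w` in `G`. -/
def closedNbhd {V : Type*} (G : SimpleGraph V) (w : V) : Set V :=
  {x | x = w ∨ G.Adj w x}

/-!
Removing `v` from `C` leaves a clique of `G`, which Zorn's lemma extends to a maximal clique `C_u`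
of `G`; it contains `u`. Every vertex of `C` other than `u` is a `G`-neighbour of `v`, so
`C ⊆ (C_u ∩ N(v)) ∪ {u, v}`. Conversely, a vertex `x ∈ C_u` adjacent to `v` is adjacent to all of
`C \ {v} ⊆ C_u` and to `v`, so maximality of `C` forces `x ∈ C`.
-/

section

variable {V : Type*} {G : SimpleGraph V}

theorem SimpleGraph.IsClique.exists_isMaxClique_superset {s : Set V} (hs : G.IsClique s) :
    ∃ C, s ⊆ C ∧ IsMaxClique G C := by
  obtain ⟨C, hsC, hC⟩ := zorn_subset_nonempty {t | G.IsClique t}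
    (fun c hc hchain _ => ⟨⋃₀ c, hchain.pairwise_sUnion.2 hc, fun _ => Set.subset_sUnion_of_mem⟩)
    s hs
  exact ⟨C, hsC, hC.prop, fun D hD hCD => hCD.antisymm (hC.2 hD hCD)⟩

theorem IsMaxClique.mem_of_isClique_insert {C : Set V} {x : V} (hC : IsMaxClique G C)
    (hx : G.IsClique (insert x C)) : x ∈ C :=
  hC.2 _ hx (Set.subset_insert x C) ▸ Set.mem_insert x C

theorem le_insEdge (u v : V) : G ≤ insEdge G u v :=
  le_sup_left

theorem insEdge_adj_iff_of_ne {u v a b : V} (h : s(a, b) ≠ s(u, v)) :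
    (insEdge G u v).Adj a b ↔ G.Adj a b := by
  simp [insEdge, h]

variable {u v : V} {C : Set V}

theorem isClique_diff_singleton_of_isClique_insEdge (hC : (insEdge G u v).IsClique C) :
    G.IsClique (C \ {v}) := by
  intro a ha b hb hab
  refine (insEdge_adj_iff_of_ne fun h => ?_).1 (hC ha.1 hb.1 hab)
  rcases Sym2.mem_iff.1 (h ▸ Sym2.mem_mk_right u v) with rfl | rfl
  exacts [ha.2 rfl, hb.2 rfl]

theorem adj_of_isClique_insEdge (hC : (insEdge G u v).IsClique C) (hv : v ∈ C) {x : V}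
    (hx : x ∈ C) (hxu : x ≠ u) (hxv : x ≠ v) : G.Adj v x := by
  refine (insEdge_adj_iff_of_ne fun h => ?_).1 (hC hv hx (Ne.symm hxv))
  rcases Sym2.eq_iff.1 h with ⟨rfl, rfl⟩ | ⟨_, rfl⟩
  exacts [hxv rfl, hxu rfl]

theorem IsMaxClique.mem_of_adj_of_mem_superset (hC : IsMaxClique (insEdge G u v) C)
    {Cu : Set V} (hCu : G.IsClique Cu) (hsub : C \ {v} ⊆ Cu) {x : V} (hx : x ∈ Cu)
    (hvx : G.Adj v x) : x ∈ C := by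
  refine hC.mem_of_isClique_insert (hC.1.insert fun b hb hxb => le_insEdge u v ?_)
  by_cases hbv : b = v
  · exact hbv ▸ hvx.symm
  · exact hCu hx (hsub ⟨hb, hbv⟩) hxb

end

theorem stmt_4_general {V : Type*} (G : SimpleGraph V) (u v : V) (huv : u ≠ v) (C : Set V)
    (hu : u ∈ C) (hv : v ∈ C) (hC : IsMaxClique (insEdge G u v) C) :
    ∃ Cu : Set V, IsMaxClique G Cu ∧ u ∈ Cu ∧
      C = (Cu ∩ closedNbhd G v) ∪ {u, v} := by
  obtain ⟨Cu, hsub, hCu⟩ :=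
    (isClique_diff_singleton_of_isClique_insEdge hC.1).exists_isMaxClique_superset
  refine ⟨Cu, hCu, hsub ⟨hu, huv⟩, Set.Subset.antisymm ?_ ?_⟩
  · intro x hx
    by_cases hxu : x = u
    · exact Or.inr (Or.inl hxu)
    by_cases hxv : x = v
    · exact Or.inr (Or.inr hxv)
    exact Or.inl ⟨hsub ⟨hx, hxv⟩, Or.inr (adj_of_isClique_insEdge hC.1 hv hx hxu hxv)⟩
  · rintro x (⟨hxCu, rfl | hvx⟩ | rfl | rfl)
    · exact hv
    · exact hC.mem_of_adj_of_mem_superset hCu.1 hsub hxCu hvx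
    · exact hu
    · exact hv

/-- If `u, v ∈ C` and `C` is a maximal clique in `G(V, E ∪ {uv})`, then there exists a maximal
clique `C_u` in `G(V,E)` with `u ∈ C_u` such that `C = (C_u ∩ N(v)) ∪ {u, v}`. -/
theorem stmt_4 {V : Type*} [Fintype V] (G : SimpleGraph V) (u v : V) (huv : u ≠ v) (C : Set V)
    (hu : u ∈ C) (hv : v ∈ C) (hC : IsMaxClique (insEdge G u v) C) :
    ∃ Cu : Set V, IsMaxClique G Cu ∧ u ∈ Cu ∧
      C = (Cu ∩ closedNbhd G v) ∪ {u, v} :=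
  stmt_4_general G u v huv C hu hv hC
end

section
/- If C is a maximal clique in G(V, E ∪ {uv}) containing both u and v, and C_u, C_v are maximal cliques in G(V,E) with C \ {v} ⊆ C_u and C \ {u} ⊆ C_v, then (C_u ∩ N(v)) ∪ {u,v} = (N(u) ∩ C_v) ∪ {u,v}, where N denotes closed neighborhood in G(V,E). -/
lemma insEdge_adj {V : Type*} (G : SimpleGraph V) (u v a b : V) :
    (insEdge G u v).Adj a b ↔ G.Adj a b ∨ (a ≠ b ∧ ((a = u ∧ b = v) ∨ (a = v ∧ b = u))) := by
  simp only [insEdge, SimpleGraph.sup_adj, SimpleGraph.fromEdgeSet_adj,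
    Set.mem_singleton_iff, Sym2.eq, Sym2.rel_iff', Prod.mk.injEq, Prod.swap_prod_mk]
  tauto

lemma insEdge_comm {V : Type*} (G : SimpleGraph V) (u v : V) :
    insEdge G u v = insEdge G v u := by
  unfold insEdge
  rw [Sym2.eq_swap]

lemma aux {V : Type*} (G : SimpleGraph V) (u v : V) (huv : u ≠ v)
    (C Cu : Set V)
    (hC : IsMaxClique (insEdge G u v) C) (hu : u ∈ C) (hv : v ∈ C)
    (hCu : IsMaxClique G Cu) (hsu : C \ {v} ⊆ Cu) :
    (Cu ∩ closedNbhd G v) ∪ {u, v} = C := by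
  ext x
  constructor
  · rintro (⟨hxCu, hxN⟩ | (rfl | rfl))
    · -- show x ∈ C by maximality
      rcases hxN with rfl | hadj
      · exact hv
      have hclique : (insEdge G u v).IsClique (C ∪ {x}) := by
        intro a ha b hb hab
        rcases ha with ha | rfl
        · rcases hb with hb | rfl
          · exact hC.1 ha hb hab
          · -- a ∈ C, b = x
            rcases eq_or_ne a v with h | hav
            · rw [h]; exact (insEdge_adj G u v _ _).2 (Or.inl hadj)
            · have haCu : a ∈ Cu := hsu ⟨ha, hav⟩
              exact (insEdge_adj G u v _ _).2 (Or.inl (hCu.1 haCu hxCu hab))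
        · rcases hb with hb | rfl
          · rcases eq_or_ne b v with h | hbv
            · rw [h]; exact (insEdge_adj G u v _ _).2 (Or.inl hadj.symm)
            · have hbCu : b ∈ Cu := hsu ⟨hb, hbv⟩
              exact (insEdge_adj G u v _ _).2 (Or.inl (hCu.1 hxCu hbCu hab))
          · exact absurd rfl hab
      have := hC.2 (C ∪ {x}) hclique Set.subset_union_left
      rw [this]
      exact Or.inr rfl
    · exact hu
    · exact hv
  · intro hx
    rcases eq_or_ne x u with rfl | hxu
    · exact Or.inr (Or.inl rfl)
    rcases eq_or_ne x v with rfl | hxv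
    · exact Or.inr (Or.inr rfl)
    left
    refine ⟨hsu ⟨hx, hxv⟩, ?_⟩
    have hadj := hC.1 hx hv hxv
    rcases (insEdge_adj G u v _ _).1 hadj with h | ⟨_, h⟩
    · exact Or.inr h.symm
    · rcases h with ⟨rfl, _⟩ | ⟨rfl, _⟩
      · exact absurd rfl hxu
      · exact absurd rfl hxv

/-- If `C` is a maximal clique in `G(V, E ∪ {uv})` containing both `u` and `v`, and
`C_u, C_v` are maximal cliques in `G(V,E)` with `C \ {v} ⊆ C_u` and `C \ {u} ⊆ C_v`, then
`(C_u ∩ N(v)) ∪ {u,v} = (N(u) ∩ C_v) ∪ {u,v}`. -/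
theorem stmt_6 {V : Type*} [Fintype V] (G : SimpleGraph V) (u v : V) (huv : u ≠ v)
    (C Cu Cv : Set V)
    (hC : IsMaxClique (insEdge G u v) C) (hu : u ∈ C) (hv : v ∈ C)
    (hCu : IsMaxClique G Cu) (hCv : IsMaxClique G Cv)
    (hsu : C \ {v} ⊆ Cu) (hsv : C \ {u} ⊆ Cv) :
    (Cu ∩ closedNbhd G v) ∪ {u, v} = (closedNbhd G u ∩ Cv) ∪ {u, v} := by
  have h1 : (Cu ∩ closedNbhd G v) ∪ {u, v} = C := aux G u v huv C Cu hC hu hv hCu hsu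
  have h2 : (Cv ∩ closedNbhd G u) ∪ {v, u} = C := by
    apply aux G v u huv.symm C Cv ?_ hv hu hCv hsv
    rw [← insEdge_comm]; exact hC
  rw [h1, ← h2, Set.inter_comm]
  congr 1
  exact Set.pair_comm v u
end

section
/- Suppose edges u₁v₁ and u₂v₂ are inserted into G(V,E) and the closed neighborhood (in G(V, E ∪ {u₁v₁, u₂v₂})) of neither u₂ nor v₂ contains u₁ or v₁. Then the set of maximal cliques of G(V, E ∪ {u₁v₁}) containing u₂ equals the set of maximal cliques of G(V,E) containing u₂. -/
/-- If edges `u₁v₁` and `u₂v₂` are inserted into `G` and the closed neighborhood (in the graph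
with both edges inserted) of neither `u₂` nor `v₂` contains `u₁` or `v₁`, then the maximal
cliques of `G + u₁v₁` containing `u₂` are exactly the maximal cliques of `G` containing `u₂`. -/
theorem stmt_14 {V : Type*} [Fintype V] (G : SimpleGraph V) (u₁ v₁ u₂ v₂ : V)
    (h₁ : u₁ ≠ v₁) (h₂ : u₂ ≠ v₂)
    (hdisj : ({u₁, v₁} : Set V) ∩
      (closedNbhd (insEdge (insEdge G u₁ v₁) u₂ v₂) u₂ ∪
       closedNbhd (insEdge (insEdge G u₁ v₁) u₂ v₂) v₂) = ∅) :
    {C : Set V | IsMaxClique (insEdge G u₁ v₁) C ∧ u₂ ∈ C} =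
      {C : Set V | IsMaxClique G C ∧ u₂ ∈ C} := by
  set G' := insEdge G u₁ v₁ with hG'
  -- u₁ and v₁ are not in the closed neighborhood of u₂ in the big graph
  have hnin : ∀ x ∈ ({u₁, v₁} : Set V),
      x ∉ closedNbhd (insEdge G' u₂ v₂) u₂ := by
    intro x hx hmem
    have : x ∈ ({u₁, v₁} : Set V) ∩
        (closedNbhd (insEdge G' u₂ v₂) u₂ ∪ closedNbhd (insEdge G' u₂ v₂) v₂) :=
      ⟨hx, Or.inl hmem⟩
    rw [hdisj] at this
    exact this
  -- key: no edge in G' from u₂ to u₁ or v₁, and u₂ ≠ u₁, v₁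
  have key : ∀ x ∈ ({u₁, v₁} : Set V), x ≠ u₂ ∧ ¬ G'.Adj u₂ x := by
    intro x hx
    have h := hnin x hx
    constructor
    · intro he; exact h (Or.inl he)
    · intro ha; exact h (Or.inr (by simp [insEdge, ha]))
  -- a G'-clique containing u₂ avoids u₁ and v₁
  have avoid : ∀ D : Set V, G'.IsClique D → u₂ ∈ D →
      u₁ ∉ D ∧ v₁ ∉ D := by
    intro D hD hu₂
    constructor
    · intro hu₁
      have hne : u₁ ≠ u₂ := (key u₁ (by simp)).1
      exact (key u₁ (by simp)).2 (hD hu₂ hu₁ hne.symm)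
    · intro hv₁
      have hne : v₁ ≠ u₂ := (key v₁ (by simp)).1
      exact (key v₁ (by simp)).2 (hD hu₂ hv₁ hne.symm)
  -- a G'-clique avoiding u₁ is a G-clique
  have transfer : ∀ D : Set V, G'.IsClique D → u₁ ∉ D → G.IsClique D := by
    intro D hD hu₁ x hx y hy hxy
    have := hD hx hy hxy
    simp only [hG', insEdge, SimpleGraph.sup_adj, SimpleGraph.fromEdgeSet_adj,
      Set.mem_singleton_iff, Sym2.eq_iff] at this
    rcases this with h | ⟨h, _⟩
    · exact h
    · rcases h with ⟨hx1, _⟩ | ⟨_, hy1⟩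
      · exact absurd hx (hx1 ▸ hu₁)
      · exact absurd hy (hy1 ▸ hu₁)
  have hle : G ≤ G' := le_sup_left
  ext C
  simp only [Set.mem_setOf_eq]
  constructor
  · rintro ⟨⟨hC, hmax⟩, hu₂⟩
    refine ⟨⟨transfer C hC (avoid C hC hu₂).1, ?_⟩, hu₂⟩
    intro D hD hsub
    exact hmax D (hD.mono hle) hsub
  · rintro ⟨⟨hC, hmax⟩, hu₂⟩
    refine ⟨⟨hC.mono hle, ?_⟩, hu₂⟩
    intro D hD hsub
    exact hmax D (transfer D hD (avoid D hD (hsub hu₂)).1) hsub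
end
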